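/- Preservation of consistency: Let X = (X_1,…,X_n) with X_i ℝ^{d_i}-valued (components X_{i,k} univariate), let (X^{(k)},U^{(k)}), k ∈ ℕ, be i.i.d. copies of (X,U) where all U_{i,k} are i.i.d. uniform on [0,1] and independent of X. Suppose the estimators ᴺd : ([0,1]^{d_1+…+d_n})^N → ℝ, N ∈ ℕ, are uniformly continuous uniformly in N, i.e., for all ε > 0 there exists δ > 0 such that for all N and all points: if max_{1≤k≤N} |x^{(k)} − y^{(k)}| < δ then |ᴺd(x^{(1)},…,x^{(N)}) − ᴺd(y^{(1)},…,y^{(N)})| < ε. Then ᴺd applied to the componentwise empirical distributional transforms of the sample, ᴺd(ᴺT(X^{[N]},U^{[N]})), and ᴺd applied to the true componentwise distributional transforms, ᴺd(T_X(X^{[N]},U^{[N]})), satisfy ᴺd(ᴺT(X^{[N]},U^{[N]})) − ᴺd(T_X(X^{[N]},U^{[N]})) → 0 almost surely as N → ∞; hence the two sequences converge to the same limit in the same mode of convergence (almost surely, respectively in probability). -/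

import Mathlib

/-!
Both transforms of a coordinate value `x` with randomisation `u` are the convex combinations
`(1 - u) F(-∞, x) + u F(-∞, x]` of the corresponding (empirical or true) law `F`, so it suffices
that the empirical laws converge to the true ones uniformly on half-lines, almost surely. This is
the Glivenko–Cantelli theorem, obtained from the strong law at the finitely many quantiles of
levels `k / m`, `0 < k < m`, with an error `1 / m` in between. Then the two transformed samples
are uniformly close in every coordinate, and the uniform equicontinuity of `ᴺd` concludes.
-/

open MeasureTheory ProbabilityTheory Set Filter

/-- The sample sequence transformed by the (componentwise) empirical distributional
transform: the `k`-th transformed sample has components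
`ᴺT(x_{i,j}^{(k)}, u_{i,j}^{(k)}; x_{i,j}^{(1)},…,x_{i,j}^{(N)})`. -/
noncomputable def empSample {Ω : Type*} {n : ℕ} {d : Fin n → ℕ}
    (X U : ℕ → Ω → ((i : Fin n) → Fin (d i) → ℝ)) (ω : Ω) (N : ℕ)
    (k : Fin N) (i : Fin n) (j : Fin (d i)) : ℝ :=
  (N : ℝ)⁻¹ * ∑ l ∈ Finset.range N,
    ((if X l ω i j < X (k : ℕ) ω i j then (1:ℝ) else 0)
      + U (k : ℕ) ω i j * (if X l ω i j = X (k : ℕ) ω i j then (1:ℝ) else 0))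

/-- The sample sequence transformed by the true (componentwise) distributional
transforms `T_{X_{i,j}}(x_{i,j}^{(k)}, u_{i,j}^{(k)})`, where `X 0` is a copy of the
underlying random vector. -/
noncomputable def trueSample {Ω : Type*} [MeasurableSpace Ω] (P : Measure Ω)
    {n : ℕ} {d : Fin n → ℕ}
    (X U : ℕ → Ω → ((i : Fin n) → Fin (d i) → ℝ)) (ω : Ω) (N : ℕ)
    (k : Fin N) (i : Fin n) (j : Fin (d i)) : ℝ :=
  (P {ω' | X 0 ω' i j < X (k : ℕ) ω i j}).toReal
    + U (k : ℕ) ω i j * (P {ω' | X 0 ω' i j = X (k : ℕ) ω i j}).toReal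

open scoped Topology

lemma le_add_of_forall_lt_levels {m : ℕ} (hm : 0 < m) {a b e : ℝ} (ha : 0 ≤ a) (hb : b ≤ 1)
    (he : 0 ≤ e) (h : ∀ k : ℕ, 0 < k → k < m → a < k / m → b ≤ k / m + e) :
    b ≤ a + e + 1 / m := by
  have hm' : (0 : ℝ) < m := Nat.cast_pos.2 hm
  set k := ⌊m * a⌋₊ + 1
  have hk_gt : a < k / m := by
    rw [lt_div_iff₀ hm']
    push_cast [k]
    linarith [Nat.lt_floor_add_one ((m : ℝ) * a)]
  have hk_le : (k : ℝ) / m ≤ a + 1 / m := by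
    rw [div_le_iff₀ hm', add_mul, one_div_mul_cancel hm'.ne']
    push_cast [k]
    linarith [Nat.floor_le (mul_nonneg hm'.le ha)]
  rcases lt_or_ge k m with hkm | hkm
  · linarith [h k (Nat.succ_pos _) hkm hk_gt]
  · have : 1 ≤ (k : ℝ) / m := by
      rw [le_div_iff₀ hm', one_mul]
      exact_mod_cast hkm
    linarith

lemma sub_le_of_forall_levels_lt {m : ℕ} (hm : 0 < m) {a b e : ℝ} (ha : a ≤ 1) (hb : 0 ≤ b)
    (he : 0 ≤ e) (h : ∀ k : ℕ, 0 < k → k < m → k / m < a → k / m - e ≤ b) :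
    a - e - 1 / m ≤ b := by
  -- the order reversal `a ↦ 1 - a`, `k ↦ m - k` of `le_add_of_forall_lt_levels`
  have hrefl := le_add_of_forall_lt_levels hm (a := 1 - a) (b := 1 - b) (by linarith)
    (by linarith) he fun k hk hkm hlt => ?_
  · linarith
  · have hmk : ((m - k : ℕ) : ℝ) / m = 1 - k / m := by
      rw [Nat.cast_sub hkm.le, sub_div, div_self (Nat.cast_pos.2 hm).ne']
    have := h (m - k) (by omega) (by omega) (by rw [hmk]; linarith)
    rw [hmk] at this
    linarith

lemma IsLowerSet.subset_Iio_or_Iic_subset {α : Type*} [LinearOrder α] {s : Set α}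
    (hs : IsLowerSet s) (t : α) : s ⊆ Iio t ∨ Iic t ⊆ s := by
  by_cases ht : t ∈ s
  · exact Or.inr (hs.Iic_subset ht)
  · exact Or.inl fun y hy => lt_of_not_ge fun hty => ht (hs hty hy)

/-- The deterministic half of the Glivenko–Cantelli theorem. -/
theorem abs_sub_le_of_quantile_grid {α : Type*} [LinearOrder α] {φ ψ : Set α → ℝ}
    (hφ : Monotone φ) (hψ : Monotone ψ) (hφ01 : ∀ s, φ s ∈ Icc (0 : ℝ) 1)
    (hψ01 : ∀ s, ψ s ∈ Icc (0 : ℝ) 1) {m : ℕ} (hm : 0 < m) {e : ℝ} (he : 0 ≤ e) {t : ℕ → α}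
    (hquant : ∀ k, 0 < k → k < m → ψ (Iio (t k)) ≤ k / m ∧ (k : ℝ) / m ≤ ψ (Iic (t k)))
    (hgrid : ∀ k, 0 < k → k < m →
      |φ (Iio (t k)) - ψ (Iio (t k))| ≤ e ∧ |φ (Iic (t k)) - ψ (Iic (t k))| ≤ e)
    {s : Set α} (hs : IsLowerSet s) : |φ s - ψ s| ≤ e + 1 / m := by
  rw [abs_sub_le_iff]
  constructor
  · have := le_add_of_forall_lt_levels hm (hψ01 s).1 (hφ01 s).2 he fun k hk hkm hlt => ?_
    · linarith
    · obtain ⟨hIio, hIic⟩ := hquant k hk hkm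
      have hsub : s ⊆ Iio (t k) := (hs.subset_Iio_or_Iic_subset (t k)).resolve_right
        fun hsup => (hψ hsup).not_gt (by linarith)
      linarith [hφ hsub, (abs_sub_le_iff.1 (hgrid k hk hkm).1).1]
  · have := sub_le_of_forall_levels_lt hm (hψ01 s).2 (hφ01 s).1 he fun k hk hkm hlt => ?_
    · linarith
    · obtain ⟨hIio, hIic⟩ := hquant k hk hkm
      have hsup : Iic (t k) ⊆ s := (hs.subset_Iio_or_Iic_subset (t k)).resolve_left
        fun hsub => (hψ hsub).not_gt (by linarith)
      linarith [hφ hsup, (abs_sub_le_iff.1 (hgrid k hk hkm).2).2]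

theorem exists_measureReal_Iio_le_le_measureReal_Iic (μ : Measure ℝ) [IsProbabilityMeasure μ]
    {c : ℝ} (hc0 : 0 < c) (hc1 : c < 1) : ∃ t, μ.real (Iio t) ≤ c ∧ c ≤ μ.real (Iic t) := by
  set S := {x | c ≤ cdf μ x}
  have hne : S.Nonempty :=
    ((tendsto_cdf_atTop μ).eventually (eventually_gt_nhds hc1)).exists.imp fun _ h => h.le
  have hbdd : BddBelow S := by
    obtain ⟨x₀, hx₀⟩ :=
      eventually_atBot.1 ((tendsto_cdf_atBot μ).eventually (eventually_lt_nhds hc0))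
    exact ⟨x₀, fun x hx => le_of_not_gt fun hlt => (hx₀ x hlt.le).not_ge hx⟩
  refine ⟨sInf S, ?_, ?_⟩
  · have hleft : Function.leftLim (cdf μ) (sInf S) ≤ c :=
      le_of_tendsto ((monotone_cdf μ).tendsto_leftLim _) <| eventually_nhdsWithin_of_forall
        fun y hy => le_of_not_ge fun hy' => (csInf_le hbdd hy').not_gt hy
    have hIio := (cdf μ).measure_Iio (tendsto_cdf_atBot μ) (sInf S)
    rw [measure_cdf, sub_zero] at hIio
    rw [measureReal_def, hIio]
    exact ENNReal.toReal_le_of_le_ofReal hc0.le (ENNReal.ofReal_le_ofReal hleft)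
  · rw [← cdf_eq_real]
    refine ge_of_tendsto (((cdf μ).right_continuous _).mono Ioi_subset_Ici_self)
      (eventually_nhdsWithin_of_forall fun x hx => ?_)
    obtain ⟨y, hyS, hyx⟩ := exists_lt_of_csInf_lt hne hx
    exact hyS.trans (monotone_cdf μ hyx.le)

theorem exists_quantile_grid {Ω : Type*} [MeasurableSpace Ω] (P : Measure Ω)
    [IsProbabilityMeasure P] {Z : Ω → ℝ} (hZ : Measurable Z) :
    ∃ t : ℕ → ℕ → ℝ, ∀ m k : ℕ, 0 < k → k < m →
      P.real (Z ⁻¹' Iio (t m k)) ≤ k / m ∧ (k : ℝ) / m ≤ P.real (Z ⁻¹' Iic (t m k)) := by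
  have hquant : ∀ m k : ℕ, ∃ t : ℝ, 0 < k → k < m →
      P.real (Z ⁻¹' Iio t) ≤ k / m ∧ (k : ℝ) / m ≤ P.real (Z ⁻¹' Iic t) := by
    intro m k
    by_cases hkm : 0 < k ∧ k < m
    · obtain ⟨hk, hkm⟩ := hkm
      have hm : (0 : ℝ) < m := by exact_mod_cast hk.trans hkm
      have := Measure.isProbabilityMeasure_map (μ := P) hZ.aemeasurable
      obtain ⟨t, ht⟩ := exists_measureReal_Iio_le_le_measureReal_Iic (P.map Z) (c := k / m)
        (div_pos (by exact_mod_cast hk) hm) ((div_lt_one hm).2 (by exact_mod_cast hkm))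
      rw [map_measureReal_apply hZ measurableSet_Iio,
        map_measureReal_apply hZ measurableSet_Iic] at ht
      exact ⟨t, fun _ _ => ht⟩
    · exact ⟨0, fun hk hkm' => absurd ⟨hk, hkm'⟩ hkm⟩
  choose t ht using hquant
  exact ⟨t, ht⟩

noncomputable def empiricalFreq {α : Type*} (z : ℕ → α) (N : ℕ) (s : Set α) : ℝ :=
  (∑ l ∈ Finset.range N, s.indicator 1 (z l)) / N

section EmpiricalFreq

variable {α : Type*} (z : ℕ → α) (N : ℕ)

lemma monotone_empiricalFreq : Monotone (empiricalFreq z N) := fun _ _ hst =>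
  div_le_div_of_nonneg_right (Finset.sum_le_sum fun _ _ =>
    indicator_le_indicator_of_subset hst (fun _ => zero_le_one) _) N.cast_nonneg

lemma empiricalFreq_mem_Icc (s : Set α) : empiricalFreq z N s ∈ Icc (0 : ℝ) 1 := by
  refine ⟨div_nonneg (Finset.sum_nonneg fun _ _ => indicator_nonneg (fun _ _ => zero_le_one) _)
    N.cast_nonneg, div_le_one_of_le₀ ?_ N.cast_nonneg⟩
  calc ∑ l ∈ Finset.range N, s.indicator 1 (z l) ≤ ∑ _l ∈ Finset.range N, (1 : ℝ) :=
        Finset.sum_le_sum fun _ _ => indicator_le_self' (fun _ _ => zero_le_one) _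
    _ = N := by simp

lemma empiricalFreq_union {s t : Set α} (hst : Disjoint s t) :
    empiricalFreq z N (s ∪ t) = empiricalFreq z N s + empiricalFreq z N t := by
  simp only [empiricalFreq, indicator_union_of_disjoint hst, Finset.sum_add_distrib, add_div]

end EmpiricalFreq

section GlivenkoCantelli

variable {Ω : Type*} [MeasurableSpace Ω] (P : Measure Ω) [IsProbabilityMeasure P]
  {Z : ℕ → Ω → ℝ} (hZ : ∀ l, Measurable (Z l))
  (hindep : Pairwise fun l l' => IndepFun (Z l) (Z l') P)
  (hid : ∀ l, IdentDistrib (Z l) (Z 0) P P)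
include hZ hindep hid

theorem ae_tendsto_empiricalFreq {s : Set ℝ} (hs : MeasurableSet s) :
    ∀ᵐ ω ∂P, Tendsto (fun N => empiricalFreq (Z · ω) N s) atTop
      (𝓝 (P.real (Z 0 ⁻¹' s))) := by
  have hind : Measurable (s.indicator (1 : ℝ → ℝ)) := measurable_one.indicator hs
  have hslln := strong_law_ae_real (fun l => s.indicator 1 ∘ Z l)
    ((integrable_const (1 : ℝ)).indicator (hZ 0 hs))
    (fun l l' hll' => (hindep hll').comp hind hind) (fun l => (hid l).comp hind)
  rwa [show s.indicator 1 ∘ Z 0 = (Z 0 ⁻¹' s).indicator 1 from rfl,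
    integral_indicator_one (hZ 0 hs)] at hslln

theorem glivenko_cantelli :
    ∀ᵐ ω ∂P, TendstoUniformlyOn (fun N => empiricalFreq (Z · ω) N)
      (fun s => P.real (Z 0 ⁻¹' s)) atTop {s | IsLowerSet s} := by
  set ψ : Set ℝ → ℝ := fun s => P.real (Z 0 ⁻¹' s)
  obtain ⟨t, ht⟩ := exists_quantile_grid P (hZ 0)
  have hslln : ∀ᵐ ω ∂P, ∀ m k,
      Tendsto (fun N => empiricalFreq (Z · ω) N (Iio (t m k))) atTop (𝓝 (ψ (Iio (t m k)))) ∧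
      Tendsto (fun N => empiricalFreq (Z · ω) N (Iic (t m k))) atTop (𝓝 (ψ (Iic (t m k)))) :=
    ae_all_iff.2 fun _ => ae_all_iff.2 fun _ =>
      (ae_tendsto_empiricalFreq P hZ hindep hid measurableSet_Iio).and
        (ae_tendsto_empiricalFreq P hZ hindep hid measurableSet_Iic)
  filter_upwards [hslln] with ω hω
  rw [Metric.tendstoUniformlyOn_iff]
  intro ε hε
  obtain ⟨m, hm⟩ := exists_nat_gt (2 / ε)
  have hm0 : 0 < m := by exact_mod_cast (by positivity : 0 < 2 / ε).trans hm
  have hclose {a : ℝ} {f : ℕ → ℝ} (hf : Tendsto f atTop (𝓝 a)) :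
      ∀ᶠ N in atTop, |f N - a| ≤ ε / 2 :=
    (Metric.tendsto_nhds.1 hf _ (half_pos hε)).mono fun _ hN => (Real.dist_eq _ _ ▸ hN).le
  have hgrid : ∀ᶠ N in atTop, ∀ k ∈ Finset.range m,
      |empiricalFreq (Z · ω) N (Iio (t m k)) - ψ (Iio (t m k))| ≤ ε / 2 ∧
      |empiricalFreq (Z · ω) N (Iic (t m k)) - ψ (Iic (t m k))| ≤ ε / 2 :=
    (eventually_all_finset _).2 fun k _ => (hclose (hω m k).1).and (hclose (hω m k).2)
  filter_upwards [hgrid] with N hN s hs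
  rw [dist_comm, Real.dist_eq]
  have hm_inv : 1 / (m : ℝ) < ε / 2 := by
    rw [div_lt_iff₀ (by positivity)] at hm
    rw [div_lt_iff₀ (by positivity)]
    linarith
  calc |empiricalFreq (Z · ω) N s - ψ s| ≤ ε / 2 + 1 / m :=
        abs_sub_le_of_quantile_grid (monotone_empiricalFreq _ N)
          (fun _ _ hst => measureReal_mono (preimage_mono hst)) (empiricalFreq_mem_Icc _ N)
          (fun _ => ⟨measureReal_nonneg, measureReal_le_one⟩) hm0 (half_pos hε).le
          (ht m) (fun k _ hkm => hN k (Finset.mem_range.2 hkm)) hs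
    _ < ε := by linarith

end GlivenkoCantelli

/-- The distributional transform `φ(-∞, x) + u φ{x}` of a set function `φ`: for `φ` the law
of `X` this is `T_X(x, u)`, for `φ` an empirical frequency it is `ᴺT(x, u; …)`. -/
def distribTransform (φ : Set ℝ → ℝ) (x u : ℝ) : ℝ := φ (Iio x) + u * φ {x}

section DistribTransform

variable {φ ψ : Set ℝ → ℝ} {x u : ℝ}

lemma distribTransform_eq_of_Iic (hφ : φ (Iic x) = φ (Iio x) + φ {x}) :
    distribTransform φ x u = (1 - u) * φ (Iio x) + u * φ (Iic x) := by
  rw [distribTransform, hφ]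
  ring

lemma distribTransform_mem_Icc (hφ : φ (Iic x) = φ (Iio x) + φ {x})
    (hIio : φ (Iio x) ∈ Icc (0 : ℝ) 1) (hIic : φ (Iic x) ∈ Icc (0 : ℝ) 1)
    (hu : u ∈ Icc (0 : ℝ) 1) : distribTransform φ x u ∈ Icc (0 : ℝ) 1 := by
  rw [distribTransform_eq_of_Iic hφ]
  exact convex_Icc (0 : ℝ) 1 hIio hIic (by linarith [hu.2]) hu.1 (by ring)

lemma abs_distribTransform_sub_lt {δ : ℝ} (hφ : φ (Iic x) = φ (Iio x) + φ {x})
    (hψ : ψ (Iic x) = ψ (Iio x) + ψ {x}) (hu : u ∈ Icc (0 : ℝ) 1)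
    (hIio : |φ (Iio x) - ψ (Iio x)| < δ) (hIic : |φ (Iic x) - ψ (Iic x)| < δ) :
    |distribTransform φ x u - distribTransform ψ x u| < δ := by
  have hball := convex_ball (0 : ℝ) δ (mem_ball_zero_iff.2 hIio) (mem_ball_zero_iff.2 hIic)
    (by linarith [hu.2] : 0 ≤ 1 - u) hu.1 (by ring)
  rw [mem_ball_zero_iff, Real.norm_eq_abs, smul_eq_mul, smul_eq_mul] at hball
  rw [distribTransform_eq_of_Iic hφ, distribTransform_eq_of_Iic hψ]
  convert hball using 2
  ring

end DistribTransform

lemma empiricalFreq_Iic {α : Type*} [PartialOrder α] (z : ℕ → α) (N : ℕ) (x : α) :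
    empiricalFreq z N (Iic x) = empiricalFreq z N (Iio x) + empiricalFreq z N {x} := by
  rw [← Iio_union_right, empiricalFreq_union _ _ (disjoint_singleton_right.2 self_notMem_Iio)]

lemma measureReal_preimage_Iic {Ω α : Type*} [MeasurableSpace Ω] [MeasurableSpace α]
    [PartialOrder α] [MeasurableSingletonClass α] (μ : Measure Ω) [IsFiniteMeasure μ]
    {Z : Ω → α} (hZ : Measurable Z) (x : α) :
    μ.real (Z ⁻¹' Iic x) = μ.real (Z ⁻¹' Iio x) + μ.real (Z ⁻¹' {x}) := by
  rw [← Iio_union_right, preimage_union,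
    measureReal_union ((disjoint_singleton_right.2 self_notMem_Iio).preimage Z)
      (hZ (measurableSet_singleton x))]

lemma ae_mem_of_map_eq_restrict {Ω α : Type*} [MeasurableSpace Ω] [MeasurableSpace α]
    {P : Measure Ω} {ν : Measure α} {Y : Ω → α} (hY : AEMeasurable Y P) {s : Set α}
    (hs : MeasurableSet s) (hmap : P.map Y = ν.restrict s) : ∀ᵐ ω ∂P, Y ω ∈ s :=
  ae_of_ae_map hY (hmap ▸ ae_restrict_mem hs)

section Samples

variable {Ω : Type*} {n : ℕ} {d : Fin n → ℕ} {X U : ℕ → Ω → ((i : Fin n) → Fin (d i) → ℝ)}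
  {ω : Ω} {N : ℕ}

lemma empSample_eq_distribTransform (k : Fin N) (i : Fin n) (j : Fin (d i)) :
    empSample X U ω N k i j =
      distribTransform (empiricalFreq (X · ω i j) N) (X k ω i j) (U k ω i j) := by
  simp only [empSample, distribTransform, empiricalFreq, Finset.sum_add_distrib,
    ← Finset.mul_sum, indicator_apply, mem_Iio, mem_singleton_iff, Pi.one_apply]
  ring

lemma trueSample_eq_distribTransform [MeasurableSpace Ω] (P : Measure Ω) (k : Fin N) (i : Fin n)
    (j : Fin (d i)) :
    trueSample P X U ω N k i j =
      distribTransform (fun s => P.real ((X 0 · i j) ⁻¹' s)) (X k ω i j) (U k ω i j) :=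
  rfl

lemma empSample_mem_Icc (hU : ∀ k i j, U k ω i j ∈ Icc (0 : ℝ) 1) (k : Fin N) (i : Fin n)
    (j : Fin (d i)) : empSample X U ω N k i j ∈ Icc (0 : ℝ) 1 := by
  rw [empSample_eq_distribTransform]
  exact distribTransform_mem_Icc (empiricalFreq_Iic _ N _) (empiricalFreq_mem_Icc _ N _)
    (empiricalFreq_mem_Icc _ N _) (hU k i j)

variable [MeasurableSpace Ω] {P : Measure Ω} [IsProbabilityMeasure P]

lemma trueSample_mem_Icc (hX : ∀ i j, Measurable (X 0 · i j))
    (hU : ∀ k i j, U k ω i j ∈ Icc (0 : ℝ) 1) (k : Fin N) (i : Fin n) (j : Fin (d i)) :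
    trueSample P X U ω N k i j ∈ Icc (0 : ℝ) 1 := by
  rw [trueSample_eq_distribTransform]
  exact distribTransform_mem_Icc (measureReal_preimage_Iic P (hX i j) _)
    ⟨measureReal_nonneg, measureReal_le_one⟩ ⟨measureReal_nonneg, measureReal_le_one⟩ (hU k i j)

lemma dist_empSample_trueSample_lt (hX : ∀ i j, Measurable (X 0 · i j))
    (hU : ∀ k i j, U k ω i j ∈ Icc (0 : ℝ) 1) {δ : ℝ} (hδ : 0 < δ)
    (hN : ∀ i j, ∀ s ∈ {s : Set ℝ | IsLowerSet s},
      dist (P.real ((X 0 · i j) ⁻¹' s)) (empiricalFreq (X · ω i j) N s) < δ) (k : Fin N) :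
    dist (empSample X U ω N k) (trueSample P X U ω N k) < δ := by
  refine (dist_pi_lt_iff hδ).2 fun i => (dist_pi_lt_iff hδ).2 fun j => ?_
  rw [Real.dist_eq, empSample_eq_distribTransform, trueSample_eq_distribTransform]
  refine abs_distribTransform_sub_lt (empiricalFreq_Iic _ N _)
    (measureReal_preimage_Iic P (hX i j) _) (hU k i j) ?_ ?_
  · simpa only [Real.dist_eq, abs_sub_comm] using hN i j _ (isLowerSet_Iio _)
  · simpa only [Real.dist_eq, abs_sub_comm] using hN i j _ (isLowerSet_Iic _)

end Samples

theorem preservation_of_consistency_general {Ω : Type*} [MeasurableSpace Ω]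
    (P : Measure Ω) [IsProbabilityMeasure P] {n : ℕ} {d : Fin n → ℕ}
    (X U : ℕ → Ω → ((i : Fin n) → Fin (d i) → ℝ))
    (hXm : ∀ k, Measurable (X k)) (hUm : ∀ k, Measurable (U k))
    (hiid : iIndepFun (fun k ω => (X k ω, U k ω)) P)
    (hident : ∀ k, IdentDistrib (fun ω => (X k ω, U k ω)) (fun ω => (X 0 ω, U 0 ω)) P P)
    (hUunif : ∀ (i : Fin n) (j : Fin (d i)),
      Measure.map (fun ω => U 0 ω i j) P = volume.restrict (Icc (0:ℝ) 1))
    (D : (N : ℕ) → (Fin N → ((i : Fin n) → Fin (d i) → ℝ)) → ℝ)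
    (hD : ∀ ε > (0:ℝ), ∃ δ > (0:ℝ), ∀ (N : ℕ)
        (x y : Fin N → ((i : Fin n) → Fin (d i) → ℝ)),
        (∀ k i j, x k i j ∈ Icc (0:ℝ) 1) → (∀ k i j, y k i j ∈ Icc (0:ℝ) 1) →
        (∀ k, dist (x k) (y k) < δ) → |D N x - D N y| < ε) :
    ∀ᵐ ω ∂P, Tendsto
      (fun N => D N (empSample X U ω N) - D N (trueSample P X U ω N))
      atTop (nhds 0) := by
  have hcoord : ∀ l i j, Measurable (X l · i j) := fun l i j => by fun_prop
  have hfst : ∀ i j, Measurable fun p : ((i : Fin n) → Fin (d i) → ℝ) ×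
      ((i : Fin n) → Fin (d i) → ℝ) => p.1 i j := fun i j => by fun_prop
  have hsnd : ∀ i j, Measurable fun p : ((i : Fin n) → Fin (d i) → ℝ) ×
      ((i : Fin n) → Fin (d i) → ℝ) => p.2 i j := fun i j => by fun_prop
  have hGC : ∀ᵐ ω ∂P, ∀ i j, TendstoUniformlyOn (fun N => empiricalFreq (X · ω i j) N)
      (fun s => P.real ((X 0 · i j) ⁻¹' s)) atTop {s | IsLowerSet s} :=
    ae_all_iff.2 fun i => ae_all_iff.2 fun j => glivenko_cantelli P (hcoord · i j)
      (fun _ _ hll' => (hiid.indepFun hll').comp (hfst i j) (hfst i j))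
      (fun l => (hident l).comp (hfst i j))
  have hU : ∀ᵐ ω ∂P, ∀ k i j, U k ω i j ∈ Icc (0 : ℝ) 1 :=
    ae_all_iff.2 fun k => ae_all_iff.2 fun i => ae_all_iff.2 fun j =>
      ae_mem_of_map_eq_restrict (by fun_prop) measurableSet_Icc
        (((hident k).comp (hsnd i j)).map_eq.trans (hUunif i j))
  filter_upwards [hGC, hU] with ω hGCω hUω
  rw [Metric.tendsto_nhds]
  intro ε hε
  obtain ⟨δ, hδ, hDδ⟩ := hD ε hε
  filter_upwards [eventually_all.2 fun i => eventually_all.2 fun j =>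
    Metric.tendstoUniformlyOn_iff.1 (hGCω i j) δ hδ] with N hN
  rw [Real.dist_eq, sub_zero]
  exact hDδ N _ _ (empSample_mem_Icc hUω) (trueSample_mem_Icc (hcoord 0) hUω)
    (dist_empSample_trueSample_lt (hcoord 0) hUω hδ hN)

/-- Preservation of consistency: if the estimators `ᴺd` are uniformly
continuous on `([0,1]^{d_1+…+d_n})^N` uniformly in `N`, then for i.i.d. copies
`(X⁽ᵏ⁾,U⁽ᵏ⁾)` of `(X,U)` (with all `U_{i,j}` i.i.d. uniform on `[0,1]` independent
of `X`), `ᴺd(ᴺT(X^{[N]},U^{[N]})) − ᴺd(T_X(X^{[N]},U^{[N]})) → 0` almost surely. -/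
theorem preservation_of_consistency {Ω : Type*} [MeasurableSpace Ω]
    (P : Measure Ω) [IsProbabilityMeasure P] {n : ℕ} {d : Fin n → ℕ}
    (X U : ℕ → Ω → ((i : Fin n) → Fin (d i) → ℝ))
    (hXm : ∀ k, Measurable (X k)) (hUm : ∀ k, Measurable (U k))
    (hiid : iIndepFun (fun k ω => (X k ω, U k ω)) P)
    (hident : ∀ k, IdentDistrib (fun ω => (X k ω, U k ω)) (fun ω => (X 0 ω, U 0 ω)) P P)
    (hUunif : ∀ (i : Fin n) (j : Fin (d i)),
      Measure.map (fun ω => U 0 ω i j) P = volume.restrict (Icc (0:ℝ) 1))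
    (hUcomp : iIndepFun
      (fun (p : Σ i : Fin n, Fin (d i)) ω => U 0 ω p.1 p.2) P)
    (hXU : IndepFun (X 0) (U 0) P)
    (D : (N : ℕ) → (Fin N → ((i : Fin n) → Fin (d i) → ℝ)) → ℝ)
    (hD : ∀ ε > (0:ℝ), ∃ δ > (0:ℝ), ∀ (N : ℕ)
        (x y : Fin N → ((i : Fin n) → Fin (d i) → ℝ)),
        (∀ k i j, x k i j ∈ Icc (0:ℝ) 1) → (∀ k i j, y k i j ∈ Icc (0:ℝ) 1) →
        (∀ k, dist (x k) (y k) < δ) → |D N x - D N y| < ε) :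
    ∀ᵐ ω ∂P, Tendsto
      (fun N => D N (empSample X U ω N) - D N (trueSample P X U ω N))
      atTop (nhds 0) :=
  preservation_of_consistency_general P X U hXm hUm hiid hident hUunif D hD
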